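/- arXiv:2312.06248 — 4 statements merged into one kernel-verified Lean document; each statement's English description precedes it below -/
import Mathlib

section
/- Define a binary operation ⋆ on real numbers by x ⋆ y = x·y if x·y < a and x ⋆ y = x·y/a if a ≤ x·y. Then ⋆ restricted to F is an internal law on F (for f₁, f₂ ∈ F one has f₁ ⋆ f₂ ∈ F), it is associative and commutative on F, the element 1 ∈ F is a two-sided identity for ⋆ on F, and φ(p₁ + p₂) = φ(p₁) ⋆ φ(p₂) for all p₁, p₂ : ℕ; hence (F, ⋆, 1) is a commutative monoid and φ : (ℕ, +, 0) → (F, ⋆, 1) is a monoid isomorphism. -/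
/-!
Every `φ p` is the unique number of the form `a ^ n / b ^ p` (with `n : ℕ`) in `[1, a)`: the sequence
`a ^ n / b ^ p` grows by the factor `a` at each step, so it meets each interval `[c, a c)` at most once.
Since `φ p₁ * φ p₂ = a ^ n / b ^ (p₁ + p₂)` for some `n` and lies in `[1, a²)`, dividing it by `a` when it
is at least `a` brings it into `[1, a)`, where it must be `φ (p₁ + p₂)`. Injectivity of `φ` comes from
coprimality: `a ^ i / b ^ p = a ^ j / b ^ q` forces `b ^ p = b ^ q`.
-/

open Set

lemma eq_of_pow_div_mem_Ico {r s c : ℝ} (hr : 1 < r) (hs : 0 < s) {m n : ℕ}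
    (hm : r ^ m / s ∈ Ico c (r * c)) (hn : r ^ n / s ∈ Ico c (r * c)) : m = n := by
  have step : ∀ {i j : ℕ}, r ^ i / s ∈ Ico c (r * c) → r ^ j / s ∈ Ico c (r * c) → ¬ i < j := by
    intro i j hi hj hij
    have : r * (r ^ i / s) ≤ r ^ j / s := by
      rw [← mul_div_assoc, ← pow_succ']
      exact div_le_div_of_nonneg_right (pow_le_pow_right₀ hr.le hij) hs.le
    nlinarith [hi.1, hj.2]
  exact le_antisymm (not_lt.1 (step hn hm)) (not_lt.1 (step hm hn))

lemma pow_div_eq_ite_of_mul_eq_pow_div {r s x y : ℝ} (hr : 1 < r) (hs : 0 < s) {i k : ℕ}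
    (hx : x ∈ Ico 1 r) (hy : y ∈ Ico 1 r) (hxy : x * y = r ^ i / s) (hk : r ^ k / s ∈ Ico 1 r) :
    r ^ k / s = if x * y < r then x * y else x * y / r := by
  have h_one_le : 1 ≤ x * y := one_le_mul_of_one_le_of_one_le hx.1 hy.1
  split_ifs with hlt
  · rw [hxy] at hlt h_one_le ⊢
    obtain rfl : k = i :=
      eq_of_pow_div_mem_Ico hr hs (c := 1) (by simpa using hk) (by simpa using ⟨h_one_le, hlt⟩)
    rfl
  · have hk' : r ^ (k + 1) / s ∈ Ico r (r * r) := by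
      rw [pow_succ', mul_div_assoc]
      exact ⟨by nlinarith [hk.1], by nlinarith [hk.2]⟩
    have hxy' : x * y ∈ Ico r (r * r) :=
      ⟨not_lt.1 hlt, mul_lt_mul'' hx.2 hy.2 (by linarith [hx.1]) (by linarith [hy.1])⟩
    rw [hxy] at hxy' ⊢
    rw [← eq_of_pow_div_mem_Ico hr hs hk' hxy', pow_succ', mul_div_assoc, mul_div_cancel_left₀]
    positivity

lemma pow_div_pow_mem_Ico_of_isLeast {a b p k : ℕ} (ha : 1 < a) (hab : a ≤ b)
    (hk : IsLeast {k : ℕ | b ^ p ≤ a ^ (p + k)} k) :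
    (a : ℝ) ^ (p + k) / (b : ℝ) ^ p ∈ Ico 1 (a : ℝ) := by
  have hb : 0 < b := by omega
  have hbp : (0 : ℝ) < (b : ℝ) ^ p := by positivity
  rw [mem_Ico, le_div_iff₀ hbp, div_lt_iff₀ hbp, one_mul]
  refine ⟨mod_cast hk.1, ?_⟩
  have : a ^ (p + k) < a * b ^ p := by
    rcases k with _ | j
    · calc a ^ p ≤ b ^ p := Nat.pow_le_pow_left hab p
        _ < a * b ^ p := lt_mul_left (by positivity) ha
    · have hj : a ^ (p + j) < b ^ p := not_le.1 fun h => by simpa using hk.2 h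
      rw [← add_assoc, pow_succ']
      exact Nat.mul_lt_mul_of_pos_left hj (by omega)
  exact_mod_cast this

lemma Nat.Coprime.eq_of_pow_mul_pow_eq {a b : ℕ} (hab : Nat.Coprime a b) (hb : 1 < b) {i j p q : ℕ}
    (h : a ^ i * b ^ q = a ^ j * b ^ p) : p = q := by
  have hpq : b ^ p ∣ b ^ q :=
    (hab.symm.pow _ _).dvd_of_dvd_mul_left ⟨a ^ j, by rw [h, mul_comm]⟩
  have hqp : b ^ q ∣ b ^ p :=
    (hab.symm.pow _ _).dvd_of_dvd_mul_left ⟨a ^ i, by rw [← h, mul_comm]⟩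
  exact Nat.pow_right_injective hb (Nat.dvd_antisymm hpq hqp)

theorem stmt_6 (a b : ℕ) (ha : 1 < a) (hab : a < b) (hcop : Nat.Coprime a b)
    (d : ℕ → ℕ) (hd : ∀ p : ℕ, IsLeast {k : ℕ | b ^ p ≤ a ^ (p + k)} (d p))
    (φ : ℕ → ℝ) (hφ : ∀ p : ℕ, φ p = (a : ℝ) ^ (p + d p) / (b : ℝ) ^ p)
    (F : Set ℝ) (hF : F = Set.range φ)
    (star : ℝ → ℝ → ℝ)
    (hstar : ∀ x y : ℝ, star x y = if x * y < a then x * y else x * y / a) :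
    (∀ f₁ ∈ F, ∀ f₂ ∈ F, star f₁ f₂ ∈ F) ∧
    (∀ f₁ ∈ F, ∀ f₂ ∈ F, ∀ f₃ ∈ F, star (star f₁ f₂) f₃ = star f₁ (star f₂ f₃)) ∧
    (∀ f₁ ∈ F, ∀ f₂ ∈ F, star f₁ f₂ = star f₂ f₁) ∧
    (1 : ℝ) ∈ F ∧
    (∀ f ∈ F, star f 1 = f ∧ star 1 f = f) ∧
    (∀ p₁ p₂ : ℕ, φ (p₁ + p₂) = star (φ p₁) (φ p₂)) ∧
    φ 0 = 1 ∧ Function.Injective φ ∧ Set.range φ = F := by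
  have hb : 1 < b := ha.trans hab
  have hbp : ∀ p, (0 : ℝ) < (b : ℝ) ^ p := fun p => by positivity
  have hφmem : ∀ p, φ p ∈ Ico 1 (a : ℝ) := fun p =>
    hφ p ▸ pow_div_pow_mem_Ico_of_isLeast ha hab.le (hd p)
  have hom : ∀ p₁ p₂, φ (p₁ + p₂) = star (φ p₁) (φ p₂) := by
    intro p₁ p₂
    have hprod : φ p₁ * φ p₂ = (a : ℝ) ^ (p₁ + d p₁ + (p₂ + d p₂)) / (b : ℝ) ^ (p₁ + p₂) := by
      rw [hφ, hφ, div_mul_div_comm, ← pow_add, ← pow_add]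
    rw [hstar, hφ]
    exact pow_div_eq_ite_of_mul_eq_pow_div (by exact_mod_cast ha) (hbp _) (hφmem p₁) (hφmem p₂) hprod
      (hφ _ ▸ hφmem _)
  have hφ0 : φ 0 = 1 := by
    rw [hφ, Nat.le_zero.1 ((hd 0).2 (by simp))]
    simp
  have hinj : Function.Injective φ := by
    intro p q hpq
    rw [hφ, hφ, div_eq_div_iff (hbp p).ne' (hbp q).ne'] at hpq
    exact hcop.eq_of_pow_mul_pow_eq hb (by exact_mod_cast hpq)
  subst hF
  refine ⟨?_, ?_, ?_, ⟨0, hφ0⟩, ?_, hom, hφ0, hinj, rfl⟩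
  · simp only [forall_mem_range]
    exact fun p₁ p₂ => ⟨p₁ + p₂, hom p₁ p₂⟩
  · simp only [forall_mem_range]
    intro p₁ p₂ p₃
    rw [← hom, ← hom, ← hom, ← hom, add_assoc]
  · intro f₁ _ f₂ _
    rw [hstar, hstar, mul_comm]
  · simp only [forall_mem_range]
    exact fun p => ⟨by rw [hstar, mul_one, if_pos (hφmem p).2],
      by rw [hstar, one_mul, if_pos (hφmem p).2]⟩
end

section
/- For every i : ℕ, both u i and v i belong to F. -/
/-!
Every `φ p = a ^ (p + d p) / b ^ p` lies in `[1, a)`, and `φ p * φ q` differs from `φ (p + q)` only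
by an integer power of `a`. Since `[1, a)` meets each set `{a ^ k * x | k : ℤ}` at most once,
whichever of `u i * v i` or `u i * v i / a` lands in `[1, a)` equals `φ (p + q)`;
so `u i, v i ∈ F` propagates along the recursion.
-/

open Set

theorem zpow_eq_zero_of_mem_Ico {a x : ℝ} {k : ℤ} (ha : 1 < a) (hx : x ∈ Ico 1 a)
    (hkx : a ^ k * x ∈ Ico 1 a) : k = 0 := by
  have ha0 : 0 < a := zero_lt_one.trans ha
  have hk : 0 < a ^ k := zpow_pos ha0 k
  have hlt : a ^ k < a ^ (1 : ℤ) := by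
    rw [zpow_one]
    calc a ^ k = a ^ k * 1 := (mul_one _).symm
      _ ≤ a ^ k * x := mul_le_mul_of_nonneg_left hx.1 hk.le
      _ < a := hkx.2
  have hgt : a ^ (0 : ℤ) < a ^ (k + 1) := by
    rw [zpow_zero, zpow_add_one₀ ha0.ne']
    calc 1 ≤ a ^ k * x := hkx.1
      _ < a ^ k * a := mul_lt_mul_of_pos_left hx.2 hk
  rw [zpow_lt_zpow_iff_right₀ ha] at hlt hgt
  omega

section AdditiveModuloPowers

variable {a : ℝ} {φ : ℕ → ℝ}

theorem mul_mem_range_of_lt (ha : 1 < a) (hφ : ∀ p, φ p ∈ Ico 1 a)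
    (hmul : ∀ p q, ∃ k : ℤ, φ p * φ q = a ^ k * φ (p + q)) {x y : ℝ}
    (hx : x ∈ range φ) (hy : y ∈ range φ) (hxy : x * y < a) : x * y ∈ range φ := by
  obtain ⟨p, rfl⟩ := hx
  obtain ⟨q, rfl⟩ := hy
  obtain ⟨k, hk⟩ := hmul p q
  have hmem : φ p * φ q ∈ Ico 1 a := ⟨one_le_mul_of_one_le_of_one_le (hφ p).1 (hφ q).1, hxy⟩
  rw [hk] at hmem ⊢
  rw [zpow_eq_zero_of_mem_Ico ha (hφ (p + q)) hmem, zpow_zero, one_mul]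
  exact mem_range_self _

theorem mul_div_mem_range_of_le (ha : 1 < a) (hφ : ∀ p, φ p ∈ Ico 1 a)
    (hmul : ∀ p q, ∃ k : ℤ, φ p * φ q = a ^ k * φ (p + q)) {x y : ℝ}
    (hx : x ∈ range φ) (hy : y ∈ range φ) (hxy : a ≤ x * y) : x * y / a ∈ range φ := by
  obtain ⟨p, rfl⟩ := hx
  obtain ⟨q, rfl⟩ := hy
  obtain ⟨k, hk⟩ := hmul p q
  have ha0 : 0 < a := zero_lt_one.trans ha
  have hmem : φ p * φ q / a ∈ Ico 1 a := by
    rw [mem_Ico, le_div_iff₀ ha0, div_lt_iff₀ ha0, one_mul]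
    exact ⟨hxy, mul_lt_mul'' (hφ p).2 (hφ q).2 (zero_le_one.trans (hφ p).1)
      (zero_le_one.trans (hφ q).1)⟩
  have hshift : φ p * φ q / a = a ^ (k - 1) * φ (p + q) := by
    rw [hk, zpow_sub_one₀ ha0.ne']
    ring
  rw [hshift] at hmem ⊢
  rw [zpow_eq_zero_of_mem_Ico ha (hφ (p + q)) hmem, zpow_zero, one_mul]
  exact mem_range_self _

end AdditiveModuloPowers

section LeastExponent

variable {a b p n : ℕ}

theorem pow_add_lt_mul_pow_of_isLeast (ha : 1 < a) (hab : a ≤ b)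
    (hn : IsLeast {k : ℕ | b ^ p ≤ a ^ (p + k)} n) : a ^ (p + n) < a * b ^ p := by
  cases n with
  | zero =>
    calc a ^ (p + 0) = a ^ p := rfl
      _ ≤ b ^ p := Nat.pow_le_pow_left hab p
      _ < a * b ^ p := lt_mul_left (pow_pos (by omega) p) ha
  | succ k =>
    have hk : a ^ (p + k) < b ^ p := not_le.1 fun h => by simpa using hn.2 h
    calc a ^ (p + (k + 1)) = a * a ^ (p + k) := by ring
      _ < a * b ^ p := Nat.mul_lt_mul_of_pos_left hk (by omega)

theorem div_pow_mem_Ico_of_isLeast (ha : 1 < a) (hab : a ≤ b)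
    (hn : IsLeast {k : ℕ | b ^ p ≤ a ^ (p + k)} n) :
    (a : ℝ) ^ (p + n) / (b : ℝ) ^ p ∈ Ico 1 (a : ℝ) := by
  have hb : (0 : ℝ) < (b : ℝ) ^ p := pow_pos (by exact_mod_cast (by omega : 0 < b)) p
  rw [mem_Ico, one_le_div hb, div_lt_iff₀ hb]
  exact ⟨mod_cast hn.1, mod_cast pow_add_lt_mul_pow_of_isLeast ha hab hn⟩

end LeastExponent

theorem pow_div_pow_mul_pow_div_pow {a b : ℝ} (ha : a ≠ 0) (d : ℕ → ℕ) (p q : ℕ) :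
    a ^ (p + d p) / b ^ p * (a ^ (q + d q) / b ^ q) =
      a ^ ((d p + d q : ℤ) - d (p + q)) * (a ^ (p + q + d (p + q)) / b ^ (p + q)) := by
  rw [div_mul_div_comm, ← pow_add, ← pow_add, mul_div_assoc', ← zpow_natCast (n := p + q + _),
    ← zpow_add₀ ha, ← zpow_natCast]
  congr 2
  push_cast
  ring

theorem stmt_7_general (a b : ℕ) (ha : 1 < a) (hab : a < b)
    (d : ℕ → ℕ) (hd : ∀ p : ℕ, IsLeast {k : ℕ | b ^ p ≤ a ^ (p + k)} (d p))
    (φ : ℕ → ℝ) (hφ : ∀ p : ℕ, φ p = (a : ℝ) ^ (p + d p) / (b : ℝ) ^ p)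
    (F : Set ℝ) (hF : F = Set.range φ)
    (u v : ℕ → ℝ) (hu0 : u 0 = φ 1) (hv0 : v 0 = φ 1)
    (huv : ∀ i : ℕ,
      (u i * v i < a → u (i + 1) = u i ∧ v (i + 1) = u i * v i) ∧
      ((a : ℝ) ≤ u i * v i → u (i + 1) = (u i * v i) / a ∧ v (i + 1) = v i)) :
    ∀ i : ℕ, u i ∈ F ∧ v i ∈ F := by
  subst hF
  have ha' : (1 : ℝ) < a := by exact_mod_cast ha
  have hmem (p : ℕ) : φ p ∈ Ico 1 (a : ℝ) := hφ p ▸ div_pow_mem_Ico_of_isLeast ha hab.le (hd p)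
  have hmul (p q : ℕ) : ∃ k : ℤ, φ p * φ q = (a : ℝ) ^ k * φ (p + q) := by
    simp only [hφ]
    exact ⟨_, pow_div_pow_mul_pow_div_pow (by positivity) d p q⟩
  intro i
  induction i with
  | zero => exact ⟨hu0 ▸ mem_range_self 1, hv0 ▸ mem_range_self 1⟩
  | succ i ih =>
    rcases lt_or_ge (u i * v i) (a : ℝ) with hlt | hge
    · obtain ⟨hu, hv⟩ := (huv i).1 hlt
      exact ⟨hu ▸ ih.1, hv ▸ mul_mem_range_of_lt ha' hmem hmul ih.1 ih.2 hlt⟩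
    · obtain ⟨hu, hv⟩ := (huv i).2 hge
      exact ⟨hu ▸ mul_div_mem_range_of_le ha' hmem hmul ih.1 ih.2 hge, hv ▸ ih.2⟩

theorem stmt_7 (a b : ℕ) (ha : 1 < a) (hab : a < b) (hcop : Nat.Coprime a b)
    (d : ℕ → ℕ) (hd : ∀ p : ℕ, IsLeast {k : ℕ | b ^ p ≤ a ^ (p + k)} (d p))
    (φ : ℕ → ℝ) (hφ : ∀ p : ℕ, φ p = (a : ℝ) ^ (p + d p) / (b : ℝ) ^ p)
    (F : Set ℝ) (hF : F = Set.range φ)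
    (u v : ℕ → ℝ) (hu0 : u 0 = φ 1) (hv0 : v 0 = φ 1)
    (huv : ∀ i : ℕ,
      (u i * v i < a → u (i + 1) = u i ∧ v (i + 1) = u i * v i) ∧
      ((a : ℝ) ≤ u i * v i → u (i + 1) = (u i * v i) / a ∧ v (i + 1) = v i)) :
    ∀ i : ℕ, u i ∈ F ∧ v i ∈ F :=
  stmt_7_general a b ha hab d hd φ hφ F hF u v hu0 hv0 huv
end

section
/- For all i, k : ℕ: if u (i+j) = u i for all 0 ≤ j ≤ k, then v (i+k) = v i · (u i)^k; and if v (i+j) = v i for all 0 ≤ j ≤ k, then u (i+k) = u i · (v i / a)^k. -/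
/-!
Every `u i` and `v i` has the form `a ^ m / b ^ n` with `m, n ≥ 1`: this holds for `φ 1` and is
preserved by both branches of the recursion. By coprimality such a number is never a power of `a`,
so `u i ≠ 1` and `v i ≠ a`. Hence `u` can only stay constant through the first branch, which then
multiplies `v` by `u i`, and `v` can only stay constant through the second, which multiplies `u` by
`v i / a`.
-/

def powRatios (a b : ℕ) : Set ℝ :=
  {x | ∃ m n : ℕ, 0 < m ∧ 0 < n ∧ x = (a : ℝ) ^ m / (b : ℝ) ^ n}

def IsUVSequence (a : ℝ) (u v : ℕ → ℝ) : Prop :=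
  ∀ i : ℕ,
    (u i * v i < a → u (i + 1) = u i ∧ v (i + 1) = u i * v i) ∧
    (a ≤ u i * v i → u (i + 1) = (u i * v i) / a ∧ v (i + 1) = v i)

section powRatios

variable {a b : ℕ} {x y : ℝ}

theorem pow_div_pow_ne_pow (hcop : a.Coprime b) (hb : 1 < b) {m n : ℕ} (hn : 0 < n) (k : ℕ) :
    (a : ℝ) ^ m / (b : ℝ) ^ n ≠ (a : ℝ) ^ k := by
  intro h
  have hbn : (b : ℝ) ^ n ≠ 0 := by positivity
  have hnat : a ^ m = a ^ k * b ^ n := by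
    exact_mod_cast (div_eq_iff hbn).mp h
  have hdvd : b ^ n ∣ a ^ m := ⟨a ^ k, by rw [hnat, mul_comm]⟩
  have hone : b ^ n = 1 := ((hcop.pow m n).symm).eq_one_of_dvd hdvd
  exact (Nat.one_lt_pow hn.ne' hb).ne' hone

theorem ne_pow_of_mem_powRatios (hcop : a.Coprime b) (hb : 1 < b) (hx : x ∈ powRatios a b)
    (k : ℕ) : x ≠ (a : ℝ) ^ k := by
  obtain ⟨m, n, -, hn, rfl⟩ := hx
  exact pow_div_pow_ne_pow hcop hb hn k

theorem ne_zero_of_mem_powRatios (ha : a ≠ 0) (hb : b ≠ 0) (hx : x ∈ powRatios a b) : x ≠ 0 := by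
  obtain ⟨m, n, -, -, rfl⟩ := hx
  positivity

theorem mul_mem_powRatios (hx : x ∈ powRatios a b) (hy : y ∈ powRatios a b) :
    x * y ∈ powRatios a b := by
  obtain ⟨m, n, hm, hn, rfl⟩ := hx
  obtain ⟨m', n', -, hn', rfl⟩ := hy
  refine ⟨m + m', n + n', by omega, by omega, ?_⟩
  rw [pow_add, pow_add, div_mul_div_comm]

theorem mul_div_mem_powRatios (ha : a ≠ 0) (hx : x ∈ powRatios a b) (hy : y ∈ powRatios a b) :
    x * y / a ∈ powRatios a b := by
  obtain ⟨m, n, hm, hn, rfl⟩ := hx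
  obtain ⟨m', n', hm', hn', rfl⟩ := hy
  refine ⟨m + m' - 1, n + n', by omega, by omega, ?_⟩
  have ha' : (a : ℝ) ≠ 0 := by exact_mod_cast ha
  have hpow : (a : ℝ) ^ (m + m') = (a : ℝ) ^ (m + m' - 1) * a := by
    rw [← pow_succ, Nat.sub_add_cancel (by omega)]
  rw [div_mul_div_comm, ← pow_add, ← pow_add, hpow]
  field_simp

end powRatios

namespace IsUVSequence

theorem forall_mem_powRatios {a b : ℕ} {u v : ℕ → ℝ} (h : IsUVSequence a u v) (ha : a ≠ 0)
    (hu0 : u 0 ∈ powRatios a b) (hv0 : v 0 ∈ powRatios a b) (i : ℕ) :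
    u i ∈ powRatios a b ∧ v i ∈ powRatios a b := by
  induction i with
  | zero => exact ⟨hu0, hv0⟩
  | succ i ih =>
    obtain ⟨hu, hv⟩ := ih
    rcases lt_or_ge (u i * v i) a with hlt | hge
    · obtain ⟨hu', hv'⟩ := (h i).1 hlt
      exact ⟨hu' ▸ hu, hv' ▸ mul_mem_powRatios hu hv⟩
    · obtain ⟨hu', hv'⟩ := (h i).2 hge
      exact ⟨hu' ▸ mul_div_mem_powRatios ha hu hv, hv' ▸ hv⟩

variable {a : ℝ} {u v : ℕ → ℝ}

theorem v_succ_of_u_succ_eq (h : IsUVSequence a u v) {i : ℕ} (hu : u i ≠ 0) (hv : v i ≠ a)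
    (hconst : u (i + 1) = u i) : v (i + 1) = u i * v i := by
  rcases lt_or_ge (u i * v i) a with hlt | hge
  · exact ((h i).1 hlt).2
  · have hu' : u i * v i / a = u i := ((h i).2 hge).1 ▸ hconst
    have ha : a ≠ 0 := by
      rintro rfl
      exact hu (by simpa using hu'.symm)
    rw [div_eq_iff ha, mul_right_inj' hu] at hu'
    exact absurd hu' hv

theorem u_succ_of_v_succ_eq (h : IsUVSequence a u v) {i : ℕ} (hv : v i ≠ 0) (hu : u i ≠ 1)
    (hconst : v (i + 1) = v i) : u (i + 1) = u i * v i / a := by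
  rcases lt_or_ge (u i * v i) a with hlt | hge
  · have hv' : u i * v i = 1 * v i := by rw [one_mul, ← ((h i).1 hlt).2, hconst]
    exact absurd (mul_right_cancel₀ hv hv') hu
  · exact ((h i).2 hge).1

end IsUVSequence

theorem eq_mul_pow_of_forall_le_eq {u v : ℕ → ℝ}
    (hstep : ∀ i, u (i + 1) = u i → v (i + 1) = u i * v i) (i k : ℕ)
    (hconst : ∀ j ≤ k, u (i + j) = u i) : v (i + k) = v i * u i ^ k := by
  induction k with
  | zero => simp
  | succ k ih =>
    have hk : u (i + k) = u i := hconst k k.le_succ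
    have hv : v (i + k) = v i * u i ^ k := ih fun j hj => hconst j (hj.trans k.le_succ)
    have hsucc : u (i + k + 1) = u (i + k) := (hconst (k + 1) le_rfl).trans hk.symm
    rw [← add_assoc, hstep _ hsucc, hk, hv, pow_succ]
    ring

theorem eq_mul_div_pow_of_forall_le_eq {a : ℝ} {u v : ℕ → ℝ}
    (hstep : ∀ i, v (i + 1) = v i → u (i + 1) = u i * v i / a) (i k : ℕ)
    (hconst : ∀ j ≤ k, v (i + j) = v i) : u (i + k) = u i * (v i / a) ^ k := by
  induction k with
  | zero => simp
  | succ k ih =>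
    have hk : v (i + k) = v i := hconst k k.le_succ
    have hu : u (i + k) = u i * (v i / a) ^ k := ih fun j hj => hconst j (hj.trans k.le_succ)
    have hsucc : v (i + k + 1) = v (i + k) := (hconst (k + 1) le_rfl).trans hk.symm
    rw [← add_assoc, hstep _ hsucc, hk, hu, pow_succ]
    ring

theorem stmt_10_general (a b : ℕ) (ha : 1 < a) (hab : a < b) (hcop : Nat.Coprime a b)
    (d : ℕ → ℕ)
    (φ : ℕ → ℝ) (hφ : ∀ p : ℕ, φ p = (a : ℝ) ^ (p + d p) / (b : ℝ) ^ p)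
    (u v : ℕ → ℝ) (hu0 : u 0 = φ 1) (hv0 : v 0 = φ 1)
    (huv : ∀ i : ℕ,
      (u i * v i < a → u (i + 1) = u i ∧ v (i + 1) = u i * v i) ∧
      ((a : ℝ) ≤ u i * v i → u (i + 1) = (u i * v i) / a ∧ v (i + 1) = v i)) :
    ∀ i k : ℕ,
      ((∀ j : ℕ, j ≤ k → u (i + j) = u i) → v (i + k) = v i * (u i) ^ k) ∧
      ((∀ j : ℕ, j ≤ k → v (i + j) = v i) → u (i + k) = u i * (v i / a) ^ k) := by
  have hseq : IsUVSequence a u v := huv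
  have hb : 1 < b := ha.trans hab
  have hφ1 : φ 1 ∈ powRatios a b := ⟨1 + d 1, 1, by omega, one_pos, hφ 1⟩
  have hmem := hseq.forall_mem_powRatios (by omega) (hu0 ▸ hφ1) (hv0 ▸ hφ1)
  have hne_zero (x : ℝ) (hx : x ∈ powRatios a b) : x ≠ 0 :=
    ne_zero_of_mem_powRatios (by omega) (by omega) hx
  have hne_pow (x : ℝ) (hx : x ∈ powRatios a b) (k : ℕ) : x ≠ (a : ℝ) ^ k :=
    ne_pow_of_mem_powRatios hcop hb hx k
  intro i k
  refine ⟨eq_mul_pow_of_forall_le_eq (fun j => ?_) i k,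
    eq_mul_div_pow_of_forall_le_eq (fun j => ?_) i k⟩
  · exact hseq.v_succ_of_u_succ_eq (hne_zero _ (hmem j).1) (by simpa using hne_pow _ (hmem j).2 1)
  · exact hseq.u_succ_of_v_succ_eq (hne_zero _ (hmem j).2) (by simpa using hne_pow _ (hmem j).1 0)

theorem stmt_10 (a b : ℕ) (ha : 1 < a) (hab : a < b) (hcop : Nat.Coprime a b)
    (d : ℕ → ℕ) (hd : ∀ p : ℕ, IsLeast {k : ℕ | b ^ p ≤ a ^ (p + k)} (d p))
    (φ : ℕ → ℝ) (hφ : ∀ p : ℕ, φ p = (a : ℝ) ^ (p + d p) / (b : ℝ) ^ p)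
    (F : Set ℝ) (hF : F = Set.range φ)
    (u v : ℕ → ℝ) (hu0 : u 0 = φ 1) (hv0 : v 0 = φ 1)
    (huv : ∀ i : ℕ,
      (u i * v i < a → u (i + 1) = u i ∧ v (i + 1) = u i * v i) ∧
      ((a : ℝ) ≤ u i * v i → u (i + 1) = (u i * v i) / a ∧ v (i + 1) = v i)) :
    ∀ i k : ℕ,
      ((∀ j : ℕ, j ≤ k → u (i + j) = u i) → v (i + k) = v i * (u i) ^ k) ∧
      ((∀ j : ℕ, j ≤ k → v (i + j) = v i) → u (i + k) = u i * (v i / a) ^ k) :=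
  stmt_10_general a b ha hab hcop d φ hφ u v hu0 hv0 huv
end

section
/- The closure in ℝ of the set ⋃_{k ∈ ℕ} {a^k · f : f ∈ F} equals the set of real numbers x with 1 ≤ x, and the closure in ℝ of the set ⋃_{k ∈ ℤ} {a^k · f : f ∈ F} contains every positive real number (so this union is dense in the nonnegative reals). -/
/-!
Put `θ = log_a b`; it is irrational because `a` and `b` are coprime. Writing
`a ^ k * φ p = a ^ (m - p * θ)` with `m = k + p + d p`, every `a ^ (m - p * θ)` with
`m : ℤ` occurs with `k : ℤ`, and, by minimality of `d p`, with `k : ℕ` as soon as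
`m - p * θ > 0`. The numbers `m - p * θ` (`m : ℤ`, `p : ℕ`) are dense in `ℝ`, since the
`ℕ`-multiples of an irrational rotation are dense in the circle, and `t ↦ a ^ t` is continuous.
-/

open Real Set

theorem irrational_logb_of_coprime {a b : ℕ} (ha : 1 < a) (hb : 1 < b) (hab : a.Coprime b) :
    Irrational (logb a b) := by
  rintro ⟨q, hq⟩
  have ha' : (1 : ℝ) < a := by exact_mod_cast ha
  have hq_pos : 0 < q := by
    exact_mod_cast hq ▸ logb_pos ha' (by exact_mod_cast hb)
  have hnum : ((q.num.toNat : ℕ) : ℝ) = q * q.den := by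
    have h : (q.num.toNat : ℤ) = q.num := Int.toNat_of_nonneg (Rat.num_pos.mpr hq_pos).le
    rw [show ((q.num.toNat : ℕ) : ℝ) = ((q.num : ℤ) : ℝ) by exact_mod_cast h]
    exact_mod_cast (Rat.mul_den_eq_num q).symm
  have hpow : b ^ q.den = a ^ q.num.toNat := by
    have : ((b : ℝ) ^ q.den) = (a : ℝ) ^ q.num.toNat := by
      rw [← rpow_natCast, ← rpow_natCast, hnum, rpow_mul (by positivity), hq,
        rpow_logb (by positivity) ha'.ne' (by positivity)]
    exact_mod_cast this
  have hone : b ^ q.den = 1 :=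
    Nat.Coprime.eq_one_of_dvd (hpow ▸ (Nat.Coprime.pow q.num.toNat q.den hab).symm) dvd_rfl
  exact absurd (Nat.pow_eq_one.mp hone) (by simp [hb.ne', q.den_nz])

theorem dense_int_sub_nat_mul {θ : ℝ} (hθ : Irrational θ) :
    Dense {x : ℝ | ∃ (m : ℤ) (p : ℕ), x = m - p * θ} := by
  have h : DenseRange (fun p : ℕ => p • ((-θ : ℝ) : AddCircle (1 : ℝ))) :=
    denseRange_zsmul_iff_nsmul.mp
      (AddCircle.denseRange_zsmul_coe_iff.mpr (by simpa using hθ.neg))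
  convert QuotientAddGroup.dense_preimage_mk.mpr h using 1
  ext x
  simp only [mem_preimage, mem_range, ← AddCircle.coe_nsmul, nsmul_eq_mul,
    QuotientAddGroup.eq, AddSubgroup.mem_zmultiples_iff, zsmul_eq_mul, mul_one]
  constructor
  · rintro ⟨m, p, rfl⟩
    exact ⟨p, m, by ring⟩
  · rintro ⟨p, m, hm⟩
    exact ⟨m, p, by linarith⟩

theorem mem_closure_rpow_image_inter {c : ℝ} (hc0 : 0 < c) (hc1 : c ≠ 1) {E U : Set ℝ}
    (hE : Dense E) (hU : IsOpen U) {x : ℝ} (hx : 0 < x) (hxU : logb c x ∈ U) :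
    x ∈ closure ((c ^ ·) '' (U ∩ E)) := by
  have h := mem_closure_image (continuousAt_const_rpow hc0.ne')
    (hE.open_subset_closure_inter hU hxU)
  rwa [rpow_logb hc0 hc1 hx] at h

theorem rpow_sub_natCast_mul_logb {c y : ℝ} (hc0 : 0 < c) (hc1 : c ≠ 1) (hy : 0 < y)
    (x : ℝ) (p : ℕ) : c ^ (x - p * logb c y) = c ^ x / y ^ p := by
  rw [rpow_sub hc0, mul_comm, rpow_mul hc0.le, rpow_logb hc0 hc1 hy, rpow_natCast]

theorem add_le_of_isLeast_pow_le {a b p m n : ℕ} (ha : 1 < a) (hab : a ≤ b)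
    (hm : IsLeast {k | b ^ p ≤ a ^ (p + k)} m) (h : b ^ p ≤ a ^ n) : p + m ≤ n := by
  have hpn : p ≤ n :=
    (Nat.pow_le_pow_iff_right ha).mp ((Nat.pow_le_pow_left hab p).trans h)
  have := hm.2 (show b ^ p ≤ a ^ (p + (n - p)) by rwa [Nat.add_sub_cancel' hpn])
  omega

section

variable {a b : ℕ} {d : ℕ → ℕ} {φ : ℕ → ℝ}

theorem rpow_sub_mem_iUnion_zpow_mul_range (ha : 1 < a) (hb : 0 < b)
    (hφ : ∀ p : ℕ, φ p = (a : ℝ) ^ (p + d p) / (b : ℝ) ^ p) (m : ℤ) (p : ℕ) :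
    (a : ℝ) ^ ((m : ℝ) - p * logb a b) ∈
      ⋃ k : ℤ, (fun f : ℝ => (a : ℝ) ^ k * f) '' range φ := by
  have ha0 : (0 : ℝ) < a := by positivity
  refine mem_iUnion.2 ⟨m - (p + d p : ℕ), φ p, ⟨p, rfl⟩, ?_⟩
  rw [hφ, rpow_sub_natCast_mul_logb ha0 (by exact_mod_cast ha.ne') (by exact_mod_cast hb),
    rpow_intCast, zpow_sub₀ ha0.ne', zpow_natCast]
  field_simp

theorem rpow_sub_mem_iUnion_pow_mul_range (ha : 1 < a) (hab : a ≤ b)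
    (hd : ∀ p : ℕ, IsLeast {k : ℕ | b ^ p ≤ a ^ (p + k)} (d p))
    (hφ : ∀ p : ℕ, φ p = (a : ℝ) ^ (p + d p) / (b : ℝ) ^ p) {m : ℤ} {p : ℕ}
    (hpos : 0 < (m : ℝ) - p * logb a b) :
    (a : ℝ) ^ ((m : ℝ) - p * logb a b) ∈
      ⋃ k : ℕ, (fun f : ℝ => (a : ℝ) ^ k * f) '' range φ := by
  have ha' : (1 : ℝ) < a := by exact_mod_cast ha
  have hb' : (1 : ℝ) < b := by exact_mod_cast ha.trans_le hab
  have hθ : 0 ≤ logb a b := (logb_pos ha' hb').le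
  have hm : (0 : ℝ) ≤ m := by nlinarith [mul_nonneg p.cast_nonneg hθ]
  lift m to ℕ using by exact_mod_cast hm
  have hle : b ^ p ≤ a ^ m := by
    have h := one_le_rpow ha'.le hpos.le
    rw [rpow_sub_natCast_mul_logb (by positivity) ha'.ne' (by positivity), Int.cast_natCast,
      rpow_natCast, one_le_div (by positivity)] at h
    exact_mod_cast h
  obtain ⟨k, hk⟩ := Nat.exists_eq_add_of_le (add_le_of_isLeast_pow_le ha hab (hd p) hle)
  refine mem_iUnion.2 ⟨k, φ p, ⟨p, rfl⟩, ?_⟩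
  rw [hφ, rpow_sub_natCast_mul_logb (by positivity) ha'.ne' (by positivity), Int.cast_natCast,
    rpow_natCast, hk, pow_add]
  ring

end

theorem stmt_19 (a b : ℕ) (ha : 1 < a) (hab : a < b) (hcop : Nat.Coprime a b)
    (d : ℕ → ℕ) (hd : ∀ p : ℕ, IsLeast {k : ℕ | b ^ p ≤ a ^ (p + k)} (d p))
    (φ : ℕ → ℝ) (hφ : ∀ p : ℕ, φ p = (a : ℝ) ^ (p + d p) / (b : ℝ) ^ p)
    (F : Set ℝ) (hF : F = Set.range φ) :
    closure (⋃ k : ℕ, (fun f : ℝ => (a : ℝ) ^ k * f) '' F) = Set.Ici (1 : ℝ) ∧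
    ∀ x : ℝ, 0 < x →
      x ∈ closure (⋃ k : ℤ, (fun f : ℝ => (a : ℝ) ^ k * f) '' F) := by
  subst hF
  have ha0 : (0 : ℝ) < a := by exact_mod_cast zero_lt_one.trans ha
  have ha1 : (a : ℝ) ≠ 1 := by exact_mod_cast ha.ne'
  have hE := dense_int_sub_nat_mul (irrational_logb_of_coprime ha (ha.trans hab) hcop)
  refine ⟨subset_antisymm (closure_minimal ?_ isClosed_Ici) ?_, fun x hx ↦ ?_⟩
  · rintro _ ⟨_, ⟨k, rfl⟩, _, ⟨p, rfl⟩, rfl⟩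
    have hφ1 : 1 ≤ φ p := by
      rw [hφ, one_le_div (pow_pos (ha0.trans (by exact_mod_cast hab)) p)]
      exact_mod_cast (hd p).1
    exact one_le_mul_of_one_le_of_one_le (one_le_pow₀ (by exact_mod_cast ha.le)) hφ1
  · rw [← closure_Ioi, ← closure_closure (s := ⋃ k : ℕ, _)]
    refine closure_mono fun x hx ↦ closure_mono ?_
      (mem_closure_rpow_image_inter ha0 ha1 hE isOpen_Ioi (one_pos.trans hx)
        (logb_pos (by exact_mod_cast ha) hx))
    rintro _ ⟨_, ⟨hpos, m, p, rfl⟩, rfl⟩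
    exact rpow_sub_mem_iUnion_pow_mul_range ha hab.le hd hφ hpos
  · refine closure_mono ?_ (mem_closure_rpow_image_inter ha0 ha1 hE isOpen_univ hx trivial)
    rintro _ ⟨_, ⟨-, m, p, rfl⟩, rfl⟩
    exact rpow_sub_mem_iUnion_zpow_mul_range ha (by omega) hφ m p
end
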